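/- arXiv:1210.0412 — 3 statements merged into one kernel-verified Lean document; each statement's English description precedes it below -/
import Mathlib

section
/- Fix 0 < r ≤ 1 and let k = ⌊1/r⌋. For every n ≥ 1, Q(n, ⌈rn⌉) ≤ ω(n,k), where Q(n,c) = min{ ω(G) : |G| = n, χ(G) = c } and ω(n,k) is the inverse Ramsey number. -/
open SimpleGraph

/-- The independence number of a graph: clique number of the complement. -/
noncomputable def indepNum {V : Type*} (G : SimpleGraph V) : ℕ := Gᶜ.cliqueNum

/-- The chromatic number of a graph, as a natural number. -/
noncomputable def chi {V : Type*} (G : SimpleGraph V) : ℕ := G.chromaticNumber.toNat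

/-- The inverse Ramsey number ω(n,k): minimum clique number over graphs on
`n` vertices with independence number at most `k`. -/
noncomputable def invRamsey (n k : ℕ) : ℕ :=
  sInf {w | ∃ G : SimpleGraph (Fin n), _root_.indepNum G ≤ k ∧ G.cliqueNum = w}

/-- Q(n,c): minimum clique number over graphs on `n` vertices with chromatic number `c`. -/
noncomputable def Q (n c : ℕ) : ℕ :=
  sInf {w | ∃ G : SimpleGraph (Fin n), chi G = c ∧ G.cliqueNum = w}

section Aux

variable {V : Type*} [Fintype V]

lemma aux_chi_colorable (G : SimpleGraph V) : G.Colorable (chi G) :=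
  G.colorable_chromaticNumber_of_fintype

lemma aux_chi_le {G : SimpleGraph V} {m : ℕ} (h : G.Colorable m) : chi G ≤ m := by
  exact ENat.toNat_le_of_le_coe h.chromaticNumber_le

lemma aux_cliqueNum_mono {G H : SimpleGraph V} (h : H ≤ G) : H.cliqueNum ≤ G.cliqueNum := by
  obtain ⟨s, hs⟩ := H.exists_isNClique_cliqueNum
  rw [← hs.card_eq]
  exact IsClique.card_le_cliqueNum (tc := hs.isClique.mono h)

lemma aux_chi_bot [Nonempty V] : chi (⊥ : SimpleGraph V) = 1 := by
  unfold chi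
  rw [chromaticNumber_bot]
  rfl

lemma aux_cliqueNum_bot_le : (⊥ : SimpleGraph V).cliqueNum ≤ 1 := by
  obtain ⟨s, hs⟩ := (⊥ : SimpleGraph V).exists_isNClique_cliqueNum
  rw [← hs.card_eq]
  refine Finset.card_le_one.mpr fun a ha b hb => ?_
  by_contra hne
  exact hs.isClique ha hb hne

/-- Deleting one edge decreases the chromatic number by at most one. -/
lemma aux_chi_deleteEdge {G : SimpleGraph V} (u v : V) :
    chi G ≤ chi (G.deleteEdges {s(u, v)}) + 1 := by
  classical
  set G' := G.deleteEdges {s(u, v)} with hG'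
  obtain ⟨C⟩ := aux_chi_colorable G'
  refine aux_chi_le ⟨Coloring.mk
    (fun x => if x = u then Fin.last (chi G') else (C x).castSucc) ?_⟩
  intro x y hxy
  beta_reduce
  have hne : x ≠ y := hxy.ne
  by_cases hx : x = u
  · have hy : y ≠ u := fun h => hne (hx.trans h.symm)
    rw [if_pos hx, if_neg hy]
    exact ((Fin.castSucc_lt_last (C y)).ne).symm
  · by_cases hy : y = u
    · rw [if_neg hx, if_pos hy]
      exact (Fin.castSucc_lt_last (C x)).ne
    · rw [if_neg hx, if_neg hy]
      have hadj' : G'.Adj x y := by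
        rw [hG', deleteEdges_adj]
        refine ⟨hxy, ?_⟩
        intro hmem
        rw [Set.mem_singleton_iff, Sym2.eq_iff] at hmem
        rcases hmem with ⟨h1, _⟩ | ⟨_, h2⟩
        · exact hx h1
        · exact hy h2
      intro h
      exact C.valid hadj' (Fin.castSucc_injective _ h)

/-- Discrete intermediate value: any chromatic number between 1 and χ(G) is achieved
by a subgraph of G. -/
lemma aux_exists_subgraph_chi [Nonempty V] :
    ∀ (N : ℕ) (G : SimpleGraph V), G.edgeSet.ncard ≤ N → ∀ c, 1 ≤ c → c ≤ chi G →
      ∃ H, H ≤ G ∧ chi H = c := by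
  intro N
  induction N with
  | zero =>
    intro G hN c hc1 hc
    have hE : G.edgeSet = ∅ := by
      rw [← Set.ncard_eq_zero G.edgeSet.toFinite]
      omega
    have hGbot : G = ⊥ := by
      by_contra h
      exact (edgeSet_nonempty.mpr h).ne_empty hE
    subst hGbot
    rw [aux_chi_bot] at hc
    exact ⟨⊥, le_refl _, by rw [aux_chi_bot]; omega⟩
  | succ N ih =>
    intro G hN c hc1 hc
    by_cases hceq : chi G = c
    · exact ⟨G, le_refl _, hceq⟩
    have hlt : c < chi G := lt_of_le_of_ne hc (Ne.symm hceq)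
    -- G has an edge, otherwise chi G = 1 ≤ c
    have hGne : G ≠ ⊥ := by
      intro h
      subst h
      rw [aux_chi_bot] at hlt
      omega
    obtain ⟨e, he⟩ := edgeSet_nonempty.mpr hGne
    induction e using Sym2.ind with
    | _ u v =>
      set G' := G.deleteEdges {s(u, v)} with hG'
      have hcard : G'.edgeSet.ncard ≤ N := by
        have hsub : G'.edgeSet = G.edgeSet \ {s(u, v)} := edgeSet_deleteEdges _
        have hss : G.edgeSet \ {s(u, v)} ⊂ G.edgeSet :=
          Set.sdiff_singleton_ssubset.mpr he
        have := Set.ncard_lt_ncard hss G.edgeSet.toFinite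
        rw [hsub]
        omega
      have hc' : c ≤ chi G' := by
        have h3 := aux_chi_deleteEdge (G := G) u v
        rw [← hG'] at h3
        omega
      obtain ⟨H, hH, hHc⟩ := ih G' hcard c hc1 hc'
      exact ⟨H, hH.trans (deleteEdges_le _), hHc⟩

/-- The number of vertices is at most χ(G) · α(G). -/
lemma aux_card_le_chi_mul_indep (G : SimpleGraph V) :
    Fintype.card V ≤ chi G * _root_.indepNum G := by
  classical
  obtain ⟨C⟩ := aux_chi_colorable G
  have hcard : Fintype.card V =
      ∑ i : Fin (chi G), (Finset.univ.filter (fun v => C v = i)).card := by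
    rw [← Finset.card_univ]
    exact Finset.card_eq_sum_card_fiberwise (fun v _ => Finset.mem_univ (C v))
  have hfib : ∀ i : Fin (chi G),
      (Finset.univ.filter (fun v => C v = i)).card ≤ _root_.indepNum G := by
    intro i
    refine IsClique.card_le_cliqueNum (tc := ?_)
    intro x hx y hy hne
    simp only [Finset.coe_filter, Set.mem_setOf_eq] at hx hy
    rw [compl_adj]
    exact ⟨hne, fun hadj => C.valid hadj (hx.2.trans hy.2.symm)⟩
  calc Fintype.card V = ∑ i : Fin (chi G), (Finset.univ.filter (fun v => C v = i)).card :=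
        hcard
    _ ≤ ∑ _i : Fin (chi G), _root_.indepNum G := Finset.sum_le_sum fun i _ => hfib i
    _ = chi G * _root_.indepNum G := by simp [Finset.sum_const, mul_comm]

end Aux

theorem stmt_8 (r : ℝ) (hr0 : 0 < r) (hr1 : r ≤ 1) (k : ℕ) (hk : k = ⌊1 / r⌋₊)
    (n : ℕ) (hn : 1 ≤ n) :
    Q n ⌈r * n⌉₊ ≤ invRamsey n k := by
  have hnpos : (0 : ℝ) < n := by exact_mod_cast hn
  have hk1 : 1 ≤ k := by
    rw [hk]
    exact Nat.le_floor (by rw [Nat.cast_one, le_div_iff₀ hr0]; linarith)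
  have hkr : (k : ℝ) * r ≤ 1 := by
    have hfl : (k : ℝ) ≤ 1 / r := hk ▸ Nat.floor_le (by positivity)
    calc (k : ℝ) * r ≤ (1 / r) * r := by nlinarith
      _ = 1 := by field_simp
  haveI : Nonempty (Fin n) := Fin.pos_iff_nonempty.mp hn
  -- the invRamsey set is nonempty (witnessed by the complete graph)
  have hne : {w | ∃ G : SimpleGraph (Fin n), _root_.indepNum G ≤ k ∧ G.cliqueNum = w}.Nonempty := by
    refine ⟨(⊤ : SimpleGraph (Fin n)).cliqueNum, ⊤, ?_, rfl⟩
    calc _root_.indepNum (⊤ : SimpleGraph (Fin n)) = (⊥ : SimpleGraph (Fin n)).cliqueNum := by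
          rw [_root_.indepNum, compl_top]
      _ ≤ 1 := aux_cliqueNum_bot_le
      _ ≤ k := hk1
  obtain ⟨G, hα, hω⟩ := Nat.sInf_mem hne
  rw [invRamsey, ← hω]
  -- chi G ≥ ⌈r n⌉
  have hcard : n ≤ chi G * k := by
    have h1 := aux_card_le_chi_mul_indep G
    rw [Fintype.card_fin] at h1
    calc n ≤ chi G * _root_.indepNum G := h1
      _ ≤ chi G * k := Nat.mul_le_mul_left _ hα
  have hceil : ⌈r * n⌉₊ ≤ chi G := by
    rw [Nat.ceil_le]
    have h2 : (n : ℝ) ≤ (chi G : ℝ) * k := by exact_mod_cast hcard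
    have hchi0 : (0 : ℝ) ≤ chi G := Nat.cast_nonneg _
    nlinarith
  have hpos : 1 ≤ ⌈r * (n : ℝ)⌉₊ := Nat.ceil_pos.mpr (by positivity)
  obtain ⟨H, hHG, hHchi⟩ := aux_exists_subgraph_chi G.edgeSet.ncard G (le_refl _)
    ⌈r * n⌉₊ hpos hceil
  calc Q n ⌈r * n⌉₊ ≤ H.cliqueNum := Nat.sInf_le ⟨H, hHchi, rfl⟩
    _ ≤ G.cliqueNum := aux_cliqueNum_mono hHG
end

section
/- Let G be a graph on n vertices with χ(G) = ⌈rn⌉, where 0 < r ≤ 1 and k = ⌊1/r⌋. Then G contains an induced subgraph H with α(H) ≤ k and |H| ≥ ((k+1)/k · r − 1/k) · n. -/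
open SimpleGraph

/-! Greedily remove pairwise disjoint independent sets of size `k + 1` until the remainder `H`
satisfies `α(H) ≤ k`. If `t` sets were removed, giving each of them one colour and each vertex of
`H` its own colour shows `⌈rn⌉ = χ(G) ≤ |H| + t`, while `n = |H| + t(k + 1)`; eliminating `t`
gives `k|H| ≥ (k + 1)rn - n`. -/

namespace SimpleGraph

variable {V : Type*} {G : SimpleGraph V}

lemma Colorable.induce_of_isIndepSet {s J : Set V} {m : ℕ} (hJ : G.IsIndepSet J)
    (h : (G.induce (s \ J)).Colorable m) : (G.induce s).Colorable (m + 1) := by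
  classical
  obtain ⟨C⟩ := h
  refine ⟨Coloring.mk (fun v => if hv : (v : V) ∈ J then Fin.last m
    else (C ⟨v, v.2, hv⟩).castSucc) ?_⟩
  intro a b hab
  have hne : (a : V) ≠ b := G.ne_of_adj hab
  by_cases ha : (a : V) ∈ J <;> by_cases hb : (b : V) ∈ J
  · exact absurd hab (hJ ha hb hne)
  · simpa [ha, hb] using (Fin.castSucc_lt_last _).ne'
  · simp [ha, hb]
  · simpa [ha, hb] using C.valid (v := ⟨a, a.2, ha⟩) (w := ⟨b, b.2, hb⟩) hab

lemma exists_isNIndepSet_subset_of_lt_indepNum {s : Set V} {k : ℕ}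
    (h : k < (G.induce s).indepNum) : ∃ J : Finset V, ↑J ⊆ s ∧ G.IsNIndepSet (k + 1) J := by
  obtain ⟨t, ht⟩ := (G.induce s).exists_isNIndepSet_indepNum
  obtain ⟨t', hsub, hcard⟩ := Finset.exists_subset_card_eq (ht.card_eq ▸ h : k + 1 ≤ t.card)
  refine ⟨t'.map (Function.Embedding.subtype _), by simp, ?_, by simp [hcard]⟩
  rintro _ ha _ hb hne hadj
  simp only [Finset.coe_map, Function.Embedding.coe_subtype, Set.mem_image,
    Finset.mem_coe] at ha hb
  obtain ⟨a, ha, rfl⟩ := ha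
  obtain ⟨b, hb, rfl⟩ := hb
  exact ht.isIndepSet (hsub ha) (hsub hb) (fun e => hne (congrArg _ e)) hadj

lemma exists_indepNum_le_of_removing_indepSets [Fintype V] (k : ℕ) (s : Finset V) :
    ∃ u : Finset V, ∃ t : ℕ, (G.induce u).indepNum ≤ k ∧ s.card = u.card + t * (k + 1) ∧
      (G.induce s).Colorable (u.card + t) := by
  classical
  induction s using Finset.strongInductionOn with
  | _ s ih =>
  by_cases hs : (G.induce s).indepNum ≤ k
  · exact ⟨s, 0, hs, by ring, by simpa using (G.induce s).colorable_of_fintype⟩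
  obtain ⟨J, hJs, hJ⟩ := exists_isNIndepSet_subset_of_lt_indepNum (not_le.mp hs)
  rw [Finset.coe_subset] at hJs
  have hJne : J.Nonempty := Finset.card_pos.mp (by rw [hJ.card_eq]; omega)
  obtain ⟨u, t, hu, hcard, hcol⟩ := ih (s \ J) (Finset.sdiff_ssubset hJs hJne)
  refine ⟨u, t + 1, hu, ?_, ?_⟩
  · have hJle := hJ.card_eq ▸ Finset.card_le_card hJs
    rw [Finset.card_sdiff_of_subset hJs, hJ.card_eq] at hcard
    rw [add_mul, one_mul]
    omega
  · rw [Finset.coe_sdiff] at hcol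
    exact hcol.induce_of_isIndepSet hJ.isIndepSet

end SimpleGraph

lemma chi_le_of_colorable {V : Type*} {G : SimpleGraph V} {m : ℕ} (h : G.Colorable m) :
    chi G ≤ m :=
  ENat.toNat_le_of_le_natCast h.chromaticNumber_le

lemma mul_sub_div_mul_le_of_le_add {r n a t k : ℝ} (hk : 0 < k) (hn : n = a + t * (k + 1))
    (hr : r * n ≤ a + t) : ((k + 1) / k * r - 1 / k) * n ≤ a := by
  rw [show ((k + 1) / k * r - 1 / k) * n = ((k + 1) * (r * n) - n) / k by field_simp,
    div_le_iff₀ hk]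
  nlinarith

theorem stmt_10 {V : Type*} [Fintype V] (G : SimpleGraph V) (r : ℝ) (hr0 : 0 < r) (hr1 : r ≤ 1)
    (n : ℕ) (hcard : Fintype.card V = n) (k : ℕ) (hk : k = ⌊1 / r⌋₊)
    (hchi : chi G = ⌈r * n⌉₊) :
    ∃ s : Finset V, _root_.indepNum (G.induce (s : Set V)) ≤ k ∧
      ((k + 1 : ℝ) / k * r - 1 / k) * n ≤ (s.card : ℝ) := by
  have hk1 : 1 ≤ k := hk ▸ Nat.le_floor (by rw [Nat.cast_one, le_div_iff₀ hr0, one_mul]; exact hr1)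
  obtain ⟨u, t, hu, hn, hcol⟩ := G.exists_indepNum_le_of_removing_indepSets k Finset.univ
  rw [Finset.card_univ, hcard] at hn
  rw [Finset.coe_univ, colorable_congr G.induceUnivIso] at hcol
  have hrn : r * n ≤ u.card + t :=
    (Nat.le_ceil _).trans (by exact_mod_cast hchi ▸ chi_le_of_colorable hcol)
  refine ⟨u, by rwa [_root_.indepNum, cliqueNum_compl], ?_⟩
  exact mul_sub_div_mul_le_of_le_add (by exact_mod_cast hk1) (by exact_mod_cast hn) hrn
end

section
/- Let 0 < r ≤ 1 with 1/r not an integer, k = ⌊1/r⌋, and for sufficiently large n set m = n − k⌈rn⌉ and l = (k+1)⌈rn⌉ − n. Then Q(n, ⌈rn⌉) ≤ ω(kl, k) + ω((k+1)m, k+1). -/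
open SimpleGraph

/-!
Split the `c = ⌈rn⌉` colours as `c = l + m` and the `n` vertices as `n = kl + (k+1)m`, which is
possible for large `n` precisely because `k < 1/r < k + 1`. Take a graph `G` on `kl` vertices with
`α(G) ≤ k` and a graph `H` on `(k+1)m` vertices with `α(H) ≤ k+1`, both of minimum clique number,
and form their join. Its clique number is at most `ω(G) + ω(H)`, and a colouring of it needs at
least `kl / k + (k+1)m / (k+1) = c` colours, since colour classes are independent and the two sides
use disjoint colours. Finally, a minimal subgraph of chromatic number at least `c` has chromatic
number exactly `c`, since isolating a vertex saves at most one colour, and passing to a subgraph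
does not raise the clique number.
-/

open Finset

namespace SimpleGraph

variable {V W : Type*}

lemma cliqueNum_le_of_copy [Finite W] {G : SimpleGraph V} {H : SimpleGraph W} (f : Copy G H) :
    G.cliqueNum ≤ H.cliqueNum := by
  classical
  obtain ⟨s, hs⟩ := G.exists_isNClique_cliqueNum
  have hclique : H.IsClique (s.map f.toEmbedding) := by
    rw [coe_map]
    rintro _ ⟨a, ha, rfl⟩ _ ⟨b, hb, rfl⟩ hab
    exact f.toHom.map_adj (hs.isClique ha hb (ne_of_apply_ne _ hab))
  simpa [hs.card_eq] using hclique.card_le_cliqueNum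

lemma card_le_indepNum_mul_card_image [Fintype V] {α : Type*} [DecidableEq α]
    {G : SimpleGraph V} (C : G.Coloring α) :
    Fintype.card V ≤ G.indepNum * #(univ.image C) := by
  refine card_le_mul_card_image univ _ fun a _ => IsIndepSet.card_le_indepNum ?_
  intro u hu v hv _ hadj
  simp only [coe_filter, mem_univ, true_and, Set.mem_ofPred_eq] at hu hv
  exact C.valid hadj (hu.trans hv.symm)

lemma le_card_image_of_indepNum_le [Fintype V] {α : Type*} [DecidableEq α]
    {G : SimpleGraph V} (C : G.Coloring α) {a l : ℕ} (ha : 0 < a) (hG : G.indepNum ≤ a)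
    (hV : Fintype.card V = a * l) : l ≤ #(univ.image C) := by
  refine Nat.le_of_mul_le_mul_left ?_ ha
  calc a * l = Fintype.card V := hV.symm
    _ ≤ G.indepNum * #(univ.image C) := card_le_indepNum_mul_card_image C
    _ ≤ a * #(univ.image C) := Nat.mul_le_mul_right _ hG

def join (G : SimpleGraph V) (H : SimpleGraph W) : SimpleGraph (V ⊕ W) where
  Adj
    | .inl a, .inl b => G.Adj a b
    | .inr a, .inr b => H.Adj a b
    | _, _ => True
  symm := ⟨by rintro (a | a) (b | b) h <;> first | trivial | exact h.symm⟩
  loopless := ⟨by rintro (a | a) h <;> exact h.ne rfl⟩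

variable {G : SimpleGraph V} {H : SimpleGraph W}

@[simp] lemma join_adj_inl_inl {a b : V} : (G.join H).Adj (.inl a) (.inl b) ↔ G.Adj a b := Iff.rfl

@[simp] lemma join_adj_inr_inr {a b : W} : (G.join H).Adj (.inr a) (.inr b) ↔ H.Adj a b := Iff.rfl

@[simp] lemma join_adj_inl_inr {a : V} {b : W} : (G.join H).Adj (.inl a) (.inr b) := trivial

def Embedding.joinInl : G ↪g G.join H where
  toEmbedding := .inl
  map_rel_iff' := Iff.rfl

def Embedding.joinInr : H ↪g G.join H where
  toEmbedding := .inr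
  map_rel_iff' := Iff.rfl

lemma cliqueNum_join_le [Finite V] [Finite W] :
    (G.join H).cliqueNum ≤ G.cliqueNum + H.cliqueNum := by
  classical
  obtain ⟨s, hs⟩ := (G.join H).exists_isNClique_cliqueNum
  have hleft : G.IsClique s.toLeft := fun a ha b hb hab =>
    join_adj_inl_inl.1 (hs.isClique (mem_toLeft.1 ha) (mem_toLeft.1 hb) (by simpa using hab))
  have hright : H.IsClique s.toRight := fun a ha b hb hab =>
    join_adj_inr_inr.1 (hs.isClique (mem_toRight.1 ha) (mem_toRight.1 hb) (by simpa using hab))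
  rw [← hs.card_eq, ← card_toLeft_add_card_toRight]
  exact Nat.add_le_add hleft.card_le_cliqueNum hright.card_le_cliqueNum

lemma le_chromaticNumber_join [Fintype V] [Fintype W] {a b l m : ℕ} (ha : 0 < a) (hb : 0 < b)
    (hG : G.indepNum ≤ a) (hH : H.indepNum ≤ b) (hV : Fintype.card V = a * l)
    (hW : Fintype.card W = b * m) : ((l + m : ℕ) : ℕ∞) ≤ (G.join H).chromaticNumber := by
  classical
  refine le_chromaticNumber_iff_coloring.2 fun t C => ?_
  let CG := C.comp (Embedding.joinInl (H := H)).toHom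
  let CH := C.comp (Embedding.joinInr (G := G)).toHom
  have hdisj : Disjoint (univ.image CG) (univ.image CH) := by
    refine Finset.disjoint_left.2 fun _ hu hw => ?_
    obtain ⟨u, -, rfl⟩ := mem_image.1 hu
    obtain ⟨w, -, hw⟩ := mem_image.1 hw
    exact C.valid (join_adj_inl_inr (a := u) (b := w)) hw.symm
  calc l + m ≤ #(univ.image CG) + #(univ.image CH) :=
        Nat.add_le_add (le_card_image_of_indepNum_le CG ha hG hV)
          (le_card_image_of_indepNum_le CH hb hH hW)
    _ = #(univ.image CG ∪ univ.image CH) := (card_union_of_disjoint hdisj).symm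
    _ ≤ t := (card_le_univ _).trans (Fintype.card_fin t).le

lemma Colorable.of_deleteIncidenceSet {G : SimpleGraph V} {x : V} {t : ℕ}
    (h : (G.deleteIncidenceSet x).Colorable t) : G.Colorable (t + 1) := by
  classical
  obtain ⟨C⟩ := h
  refine ⟨Coloring.mk (fun v => if v = x then Fin.last t else (C v).castSucc) ?_⟩
  intro v w hvw
  by_cases hv : v = x <;> by_cases hw : w = x
  · exact absurd (hv.trans hw.symm) hvw.ne
  · simpa [hv, hw] using (Fin.castSucc_lt_last (C w)).ne'
  · simp [hv, hw]
  · simpa [hv, hw] using C.valid (deleteIncidenceSet_adj.2 ⟨hvw, hv, hw⟩)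

lemma chromaticNumber_le_chromaticNumber_deleteIncidenceSet_add_one [Finite V]
    (G : SimpleGraph V) (x : V) :
    G.chromaticNumber ≤ (G.deleteIncidenceSet x).chromaticNumber + 1 := by
  have hfin := (G.deleteIncidenceSet x).colorable_chromaticNumber_of_fintype
  calc G.chromaticNumber ≤ ((G.deleteIncidenceSet x).chromaticNumber.toNat + 1 : ℕ) :=
        hfin.of_deleteIncidenceSet.chromaticNumber_le
    _ = (G.deleteIncidenceSet x).chromaticNumber + 1 := by
        rw [Nat.cast_add, ENat.natCast_toNat (chromaticNumber_ne_top_iff_exists.2 ⟨_, hfin⟩),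
          Nat.cast_one]

lemma exists_le_chromaticNumber_eq [Finite V] (G : SimpleGraph V) {c : ℕ} (hc : 1 ≤ c)
    (h : c ≤ G.chromaticNumber) : ∃ G' ≤ G, G'.chromaticNumber = c := by
  obtain ⟨G', hG'G, hcG', hmin⟩ :=
    exists_minimal_le_of_wellFoundedLT (fun G' : SimpleGraph V => (c : ℕ∞) ≤ G'.chromaticNumber) G h
  refine ⟨G', hG'G, le_antisymm (not_lt.1 fun hlt => ?_) hcG'⟩
  have hne : G' ≠ ⊥ := two_le_chromaticNumber_iff_ne_bot.1 <|
    le_trans (by exact_mod_cast Nat.succ_le_succ hc) (Order.add_one_le_of_lt hlt)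
  obtain ⟨u, v, huv⟩ : ∃ u v, G'.Adj u v := by
    by_contra! hbot
    exact hne (by ext u v; simpa using hbot u v)
  have hdel : (c : ℕ∞) ≤ (G'.deleteIncidenceSet u).chromaticNumber :=
    (ENat.lt_add_one_iff' (ENat.natCast_ne_top c)).1
      (hlt.trans_le (G'.chromaticNumber_le_chromaticNumber_deleteIncidenceSet_add_one u))
  have hadj := hmin hdel (G'.deleteIncidenceSet_le u) huv
  exact (deleteIncidenceSet_adj.1 hadj).2.1 rfl

end SimpleGraph

lemma exists_cliqueNum_eq_invRamsey (n : ℕ) {k : ℕ} (hk : 1 ≤ k) :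
    ∃ G : SimpleGraph (Fin n), G.indepNum ≤ k ∧ G.cliqueNum = invRamsey n k := by
  have hbot : (⊥ : SimpleGraph (Fin n)).cliqueNum ≤ 1 := by
    obtain ⟨s, hs⟩ := (⊥ : SimpleGraph (Fin n)).exists_isNClique_cliqueNum
    exact hs.card_eq ▸ Finset.card_le_one.2 fun a ha b hb => hs.isClique.subsingleton ha hb
  have hne : {w | ∃ G : SimpleGraph (Fin n), _root_.indepNum G ≤ k ∧ G.cliqueNum = w}.Nonempty :=
    ⟨_, ⊤, by rw [_root_.indepNum, compl_top]; exact hbot.trans hk, rfl⟩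
  obtain ⟨G, hG, hω⟩ := Nat.sInf_mem hne
  exact ⟨G, by rwa [_root_.indepNum, cliqueNum_compl] at hG, hω⟩

lemma Q_le_cliqueNum {V : Type*} [Fintype V] (G : SimpleGraph V) {c : ℕ} (hc : 1 ≤ c)
    (h : c ≤ G.chromaticNumber) : Q (Fintype.card V) c ≤ G.cliqueNum := by
  obtain ⟨G', hG'G, hχ⟩ := G.exists_le_chromaticNumber_eq hc h
  let e := Iso.map (Fintype.equivFin V) G'
  have hχe := (chromaticNumber_congr e).symm.trans hχ
  calc Q (Fintype.card V) c ≤ _ := Nat.sInf_le ⟨_, by rw [chi, hχe, ENat.toNat_natCast], rfl⟩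
    _ ≤ G'.cliqueNum := cliqueNum_le_of_copy e.symm.toCopy
    _ ≤ G.cliqueNum := cliqueNum_le_of_copy (Copy.ofLE _ _ hG'G)

lemma floor_one_div_mul_lt_one {r : ℝ} (hr : 0 < r) (hint : ¬∃ z : ℤ, 1 / r = z) :
    (⌊1 / r⌋₊ : ℝ) * r < 1 := by
  have hne : (⌊1 / r⌋₊ : ℝ) ≠ 1 / r := fun h => hint ⟨⌊1 / r⌋₊, by exact_mod_cast h.symm⟩
  exact (lt_div_iff₀ hr).1 ((Nat.floor_le (by positivity)).lt_of_ne hne)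

lemma one_lt_floor_one_div_add_one_mul {r : ℝ} (hr : 0 < r) : 1 < ((⌊1 / r⌋₊ : ℝ) + 1) * r :=
  (div_lt_iff₀ hr).1 (Nat.lt_floor_add_one _)

lemma le_add_one_mul_ceil {r : ℝ} {k : ℕ} (hkr : 1 ≤ ((k : ℝ) + 1) * r) (n : ℕ) :
    n ≤ (k + 1) * ⌈r * n⌉₊ := by
  have hceil : r * n ≤ ⌈r * n⌉₊ := Nat.le_ceil _
  have : (n : ℝ) ≤ (k + 1) * ⌈r * n⌉₊ := by nlinarith [Nat.cast_nonneg (α := ℝ) n]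
  exact_mod_cast this

lemma eventually_mul_ceil_le {r : ℝ} {k : ℕ} (hr : 0 < r) (hkr : (k : ℝ) * r < 1) :
    ∀ᶠ n : ℕ in Filter.atTop, 1 ≤ ⌈r * n⌉₊ ∧ k * ⌈r * n⌉₊ ≤ n := by
  filter_upwards [Filter.eventually_ge_atTop 1, Filter.eventually_ge_atTop ⌈k / (1 - k * r)⌉₊]
    with n hn1 hnk
  have hn : (k : ℝ) ≤ (1 - k * r) * n :=
    (div_le_iff₀' (by linarith)).1 (Nat.ceil_le.1 hnk)
  have hceil : (⌈r * n⌉₊ : ℝ) < r * n + 1 := Nat.ceil_lt_add_one (by positivity)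
  refine ⟨Nat.one_le_iff_ne_zero.2 (Nat.ceil_pos.2 (by positivity)).ne', ?_⟩
  have : (k : ℝ) * ⌈r * n⌉₊ ≤ n := by nlinarith [Nat.cast_nonneg (α := ℝ) k]
  exact_mod_cast this

theorem stmt_18 (r : ℝ) (hr0 : 0 < r) (hr1 : r ≤ 1) (hint : ¬ ∃ z : ℤ, (1 / r : ℝ) = z)
    (k : ℕ) (hk : k = ⌊1 / r⌋₊) :
    ∃ N : ℕ, ∀ n ≥ N, ∀ m l : ℕ, m = n - k * ⌈r * n⌉₊ → l = (k + 1) * ⌈r * n⌉₊ - n →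
      Q n ⌈r * n⌉₊ ≤ invRamsey (k * l) k + invRamsey ((k + 1) * m) (k + 1) := by
  have hk1 : 1 ≤ k := hk ▸ Nat.le_floor (by simpa using one_le_one_div hr0 hr1)
  have hkr : (k : ℝ) * r < 1 := hk ▸ floor_one_div_mul_lt_one hr0 hint
  have hkr' : 1 ≤ ((k : ℝ) + 1) * r := hk ▸ (one_lt_floor_one_div_add_one_mul hr0).le
  obtain ⟨N, hN⟩ := Filter.eventually_atTop.1 (eventually_mul_ceil_le hr0 hkr)
  refine ⟨N, fun n hn m l hm hl => ?_⟩
  obtain ⟨hc, hkc⟩ := hN n hn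
  have hcn := le_add_one_mul_ceil hkr' n
  set c := ⌈r * n⌉₊
  have hlm : l + m = c := by
    have : (k + 1) * c = k * c + c := by ring
    omega
  have hn' : k * l + (k + 1) * m = n := by
    calc k * l + (k + 1) * m = k * (l + m) + m := by ring
      _ = n := by rw [hlm, hm]; omega
  obtain ⟨G, hG, hGω⟩ := exists_cliqueNum_eq_invRamsey (k * l) hk1
  obtain ⟨H, hH, hHω⟩ := exists_cliqueNum_eq_invRamsey ((k + 1) * m) (Nat.le_add_left 1 k)
  have hχ : (c : ℕ∞) ≤ (G.join H).chromaticNumber :=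
    hlm ▸ le_chromaticNumber_join hk1 k.succ_pos hG hH (Fintype.card_fin _) (Fintype.card_fin _)
  calc Q n c = Q (Fintype.card (Fin (k * l) ⊕ Fin ((k + 1) * m))) c := by simp [hn']
    _ ≤ (G.join H).cliqueNum := Q_le_cliqueNum _ hc hχ
    _ ≤ invRamsey (k * l) k + invRamsey ((k + 1) * m) (k + 1) := hGω ▸ hHω ▸ cliqueNum_join_le
end
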